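/- arXiv:1709.00750 — 4 statements merged into one kernel-verified Lean document; each statement's English description precedes it below -/
import Mathlib

section
/- For |q| < 1 and z ≠ 0, the series ∑_{k∈ℤ} (-1)^k z^k q^{k(k-1)/2} equals the infinite product (1-z)∏_{i=1}^∞ (1-q^i)(1-q^i z)(1-q^i z^{-1}) (Jacobi triple product in this form). -/
/-!
Substituting `x = -z q⁻ᵃ` into Gauss's `q`-binomial theorem
`∏_{i<n} (1 + x qⁱ) = ∑_k q^(k choose 2) [n choose k]_q xᵏ`, `n = a + b`, gives a finite triple
product
`∏_{j<a} (1 - q^(j+1) z⁻¹) ∏_{i<b} (1 - qⁱ z) = ∑_m (-1)ᵐ zᵐ q^(m(m-1)/2) [a+b choose a+m]_q`.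
Take `a = M`, `b = M + 1` and multiply by `(q;q)_M`: the weights `(q;q)_M [2M+1 choose M+m]_q` are
bounded uniformly in `M` and `m` and tend to `1` as `M → ∞`, since `(q;q)_n` converges to the
nonzero limit `(q;q)_∞`. Tannery's theorem then lets the finite identity pass to the limit.
-/

open Finset Filter Topology

theorem Int.two_mul_mul_sub_one_ediv_two (m : ℤ) : 2 * (m * (m - 1) / 2) = m * (m - 1) :=
  Int.two_mul_ediv_two_of_even (Int.even_mul_pred_self m)

theorem Int.add_mul_add_sub_one_ediv_two (m n : ℤ) :
    (m + n) * (m + n - 1) / 2 = m * (m - 1) / 2 + n * (n - 1) / 2 + m * n := by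
  have h : (m + n) * (m + n - 1) = m * (m - 1) + n * (n - 1) + 2 * (m * n) := by ring
  have := Int.two_mul_mul_sub_one_ediv_two m
  have := Int.two_mul_mul_sub_one_ediv_two n
  have := Int.two_mul_mul_sub_one_ediv_two (m + n)
  omega

theorem Int.neg_mul_neg_sub_one_ediv_two (m : ℤ) : -m * (-m - 1) / 2 = m * (m - 1) / 2 + m := by
  have h := Int.add_mul_add_sub_one_ediv_two (-m) m
  simp only [neg_add_cancel, zero_mul, Int.zero_ediv] at h
  linarith [Int.two_mul_mul_sub_one_ediv_two m]

theorem Int.natCast_mul_sub_one_ediv_two (k : ℕ) : (k : ℤ) * (k - 1) / 2 = k.choose 2 := by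
  induction k with
  | zero => rfl
  | succ k ih =>
    rw [Nat.cast_succ, Int.add_mul_add_sub_one_ediv_two, ih, Nat.choose_succ_succ',
      Nat.choose_one_right]
    push_cast
    ring

section QBinomial

variable {R : Type*} [CommRing R] (q : R)

/-- The `q`-Pochhammer symbol `(q;q)_n`. -/
def qPoch (n : ℕ) : R := ∏ i ∈ range n, (1 - q ^ (i + 1))

def qBinom : ℕ → ℕ → R
  | _, 0 => 1
  | 0, _ + 1 => 0
  | n + 1, k + 1 => qBinom n k + q ^ (k + 1) * qBinom n (k + 1)

@[simp] theorem qBinom_zero_right (n : ℕ) : qBinom q n 0 = 1 := by cases n <;> rfl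

theorem qBinom_succ_succ (n k : ℕ) :
    qBinom q (n + 1) (k + 1) = qBinom q n k + q ^ (k + 1) * qBinom q n (k + 1) := rfl

theorem qBinom_eq_zero_of_lt : ∀ {n k : ℕ}, n < k → qBinom q n k = 0
  | 0, _ + 1, _ => rfl
  | n + 1, k + 1, h => by
    rw [qBinom_succ_succ, qBinom_eq_zero_of_lt (by omega), qBinom_eq_zero_of_lt (by omega)]
    ring

theorem qBinom_self : ∀ n : ℕ, qBinom q n n = 1
  | 0 => rfl
  | n + 1 => by rw [qBinom_succ_succ, qBinom_self n, qBinom_eq_zero_of_lt q n.lt_succ_self]; ring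

theorem qBinom_add_mul_qPoch_mul_qPoch : ∀ k l : ℕ,
    qBinom q (k + l) k * qPoch q k * qPoch q l = qPoch q (k + l)
  | 0, l => by simp [qPoch]
  | k + 1, 0 => by simp [qBinom_self, qPoch]
  | k + 1, l + 1 => by
    have h₁ := qBinom_add_mul_qPoch_mul_qPoch k (l + 1)
    have h₂ := qBinom_add_mul_qPoch_mul_qPoch (k + 1) l
    rw [show k + 1 + (l + 1) = k + (l + 1) + 1 by omega, qBinom_succ_succ]
    rw [show k + 1 + l = k + (l + 1) by omega] at h₂
    simp only [qPoch, prod_range_succ] at h₁ h₂ ⊢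
    linear_combination (1 - q ^ (k + 1)) * h₁ + q ^ (k + 1) * (1 - q ^ (l + 1)) * h₂

theorem prod_one_add_mul_pow_eq_sum_qBinom (x : R) (n : ℕ) :
    ∏ i ∈ range n, (1 + x * q ^ i) =
      ∑ k ∈ range (n + 1), q ^ k.choose 2 * qBinom q n k * x ^ k := by
  induction n generalizing x with
  | zero => simp
  | succ n ih =>
    set g : ℕ → R := fun k ↦ q ^ k.choose 2 * qBinom q n k * (x * q) ^ k
    have hg : ∀ k, q ^ (k + 1).choose 2 * qBinom q (n + 1) (k + 1) * x ^ (k + 1) =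
        x * g k + g (k + 1) := by
      intro k
      simp only [g, qBinom_succ_succ, Nat.choose_succ_succ', Nat.choose_one_right]
      ring
    have hS : ∑ k ∈ range (n + 1), g (k + 1) + 1 = ∑ k ∈ range (n + 1), g k := by
      have hg0 : g 0 = 1 := by simp [g]
      rw [← hg0, ← sum_range_succ' g, sum_range_succ]
      simp [g, qBinom_eq_zero_of_lt q n.lt_succ_self]
    have hP : ∏ i ∈ range n, (1 + x * q ^ (i + 1)) = ∑ k ∈ range (n + 1), g k := by
      simp only [pow_succ', ← mul_assoc]
      exact ih (x * q)
    rw [prod_range_succ', sum_range_succ', sum_congr rfl fun k _ ↦ hg k, sum_add_distrib,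
      ← mul_sum, hP, ← hS]
    simp only [pow_zero, mul_one, Nat.choose_zero_succ, qBinom_zero_right]
    ring

def qBinomInt (n : ℕ) : ℤ → R
  | .ofNat k => qBinom q n k
  | .negSucc _ => 0

theorem qBinomInt_natCast (n k : ℕ) : qBinomInt q n k = qBinom q n k := rfl

theorem tsum_mul_qBinomInt [TopologicalSpace R] (n : ℕ) (g : ℤ → R) :
    ∑' k : ℤ, g k * qBinomInt q n k = ∑ k ∈ range (n + 1), g k * qBinom q n k := by
  rw [tsum_eq_sum (s := (range (n + 1)).map Nat.castEmbedding), sum_map]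
  · rfl
  rintro (k | k) hk
  · replace hk : n < k := by simpa using hk
    rw [Int.ofNat_eq_natCast, qBinomInt_natCast, qBinom_eq_zero_of_lt q hk, mul_zero]
  · exact mul_zero _

end QBinomial

theorem qBinom_add_eq {K : Type*} [Field K] {q : K} {k l : ℕ} (hk : qPoch q k ≠ 0)
    (hl : qPoch q l ≠ 0) : qBinom q (k + l) k = qPoch q (k + l) / (qPoch q k * qPoch q l) := by
  rw [← qBinom_add_mul_qPoch_mul_qPoch]
  field_simp

section JacobiTerm

variable {K : Type*} [Field K] {q z : K}

def jacobiTerm (q z : K) (m : ℤ) : K := (-1) ^ m * z ^ m * q ^ (m * (m - 1) / 2)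

theorem jacobiTerm_add (hq : q ≠ 0) (hz : z ≠ 0) (m n : ℤ) :
    jacobiTerm q z (m + n) = jacobiTerm q z m * jacobiTerm q z n * q ^ (m * n) := by
  simp only [jacobiTerm, Int.add_mul_add_sub_one_ediv_two, zpow_add₀ hq, zpow_add₀ hz,
    zpow_add₀ (neg_ne_zero.2 one_ne_zero : (-1 : K) ≠ 0)]
  ring

@[simp] theorem jacobiTerm_zero : jacobiTerm q z 0 = 1 := by simp [jacobiTerm]

@[simp] theorem jacobiTerm_one : jacobiTerm q z 1 = -z := by simp [jacobiTerm]

theorem jacobiTerm_ne_zero (hq : q ≠ 0) (hz : z ≠ 0) (m : ℤ) : jacobiTerm q z m ≠ 0 :=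
  mul_ne_zero (mul_ne_zero (zpow_ne_zero _ (neg_ne_zero.2 one_ne_zero)) (zpow_ne_zero _ hz))
    (zpow_ne_zero _ hq)

theorem jacobiTerm_natCast (k : ℕ) : jacobiTerm q z k = (-z) ^ k * q ^ k.choose 2 := by
  rw [jacobiTerm, Int.natCast_mul_sub_one_ediv_two, zpow_natCast, zpow_natCast, zpow_natCast,
    neg_pow z]

theorem jacobiTerm_neg (hq : q ≠ 0) (m : ℤ) : jacobiTerm q z (-m) = jacobiTerm q (q * z⁻¹) m := by
  rw [jacobiTerm, zpow_neg (-1 : K), ← inv_zpow, inv_neg_one]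
  simp only [jacobiTerm, Int.neg_mul_neg_sub_one_ediv_two, zpow_neg, zpow_add₀ hq, mul_zpow,
    inv_zpow]
  ring

theorem inv_jacobiTerm_neg_natCast (hq : q ≠ 0) (hz : z ≠ 0) (a : ℕ) :
    (jacobiTerm q z (-a))⁻¹ = ∏ j ∈ range a, (-z * (q ^ (j + 1))⁻¹) := by
  induction a with
  | zero => simp
  | succ a ih =>
    rw [Nat.cast_succ, neg_add, jacobiTerm_add hq hz, jacobiTerm_neg hq 1, jacobiTerm_one,
      neg_mul_neg, mul_one, zpow_natCast, prod_range_succ, ← ih]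
    field_simp
    ring

theorem tsum_jacobiTerm_zero_left [TopologicalSpace K] (z : K) :
    ∑' m : ℤ, jacobiTerm 0 z m = 1 - z := by
  rw [tsum_eq_sum (s := {0, 1}), sum_pair zero_ne_one]
  · rw [jacobiTerm_zero, jacobiTerm_one, sub_eq_add_neg]
  intro m hm
  have h : m * (m - 1) / 2 ≠ 0 := by
    have := Int.two_mul_mul_sub_one_ediv_two m
    simp only [mem_insert, mem_singleton, not_or] at hm
    intro h0
    rw [h0, mul_zero, eq_comm, mul_eq_zero, sub_eq_zero] at this
    tauto
  simp [jacobiTerm, zero_zpow _ h]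

def jacobiFactor (q z : K) (i : ℕ) : K :=
  (1 - q ^ (i + 1)) * (1 - q ^ (i + 1) * z) * (1 - q ^ (i + 1) * z⁻¹)

theorem prod_mul_prod_eq_tsum_jacobiTerm [TopologicalSpace K] (hq : q ≠ 0) (hz : z ≠ 0)
    (a b : ℕ) :
    (∏ j ∈ range a, (1 - q ^ (j + 1) * z⁻¹)) * ∏ i ∈ range b, (1 - q ^ i * z) =
      ∑' m : ℤ, jacobiTerm q z m * qBinomInt q (a + b) (m + a) := by
  set c := jacobiTerm q z (-a) with hc_def
  have hc : c ≠ 0 := jacobiTerm_ne_zero hq hz _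
  set x := -z * (q ^ a)⁻¹
  have hxa : x * q ^ a = -z := by simp [x, hq]
  have hlow : ∏ i ∈ range a, (1 + x * q ^ i) = c⁻¹ * ∏ j ∈ range a, (1 - q ^ (j + 1) * z⁻¹) := by
    rw [inv_jacobiTerm_neg_natCast hq hz, ← prod_mul_distrib, ← prod_range_reflect]
    refine prod_congr rfl fun j hj ↦ ?_
    have hpow : q ^ (a - 1 - j) * q ^ (j + 1) = q ^ a := by
      rw [← pow_add]; congr 1; have := mem_range.1 hj; omega
    have hx : x * q ^ (a - 1 - j) = -z * (q ^ (j + 1))⁻¹ := by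
      rw [← hxa, ← hpow]; field_simp
    rw [hx]
    field_simp
    ring
  have hhigh : ∀ i, 1 + x * q ^ (a + i) = 1 - q ^ i * z := fun i ↦ by
    rw [pow_add, ← mul_assoc, hxa]; ring
  have hterm : ∀ k : ℕ, q ^ k.choose 2 * x ^ k = c⁻¹ * jacobiTerm q z (k - a) := fun k ↦ by
    rw [sub_eq_neg_add, jacobiTerm_add hq hz, jacobiTerm_natCast, neg_mul, zpow_neg, zpow_mul,
      zpow_natCast, zpow_natCast, mul_pow, inv_pow, ← hc_def]
    field_simp
  calc (∏ j ∈ range a, (1 - q ^ (j + 1) * z⁻¹)) * ∏ i ∈ range b, (1 - q ^ i * z)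
      = c * ∏ i ∈ range (a + b), (1 + x * q ^ i) := by
        rw [prod_range_add, hlow]; simp only [hhigh]; field_simp
    _ = ∑ k ∈ range (a + b + 1), jacobiTerm q z (k - a) * qBinom q (a + b) k := by
        rw [prod_one_add_mul_pow_eq_sum_qBinom, mul_sum]
        refine sum_congr rfl fun k _ ↦ ?_
        rw [mul_right_comm _ (qBinom q _ _), hterm]
        field_simp
    _ = ∑' m : ℤ, jacobiTerm q z m * qBinomInt q (a + b) (m + a) := by
        rw [← tsum_mul_qBinomInt q (a + b) fun k ↦ jacobiTerm q z (k - a),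
          ← (Equiv.addRight (a : ℤ)).tsum_eq]
        simp

end JacobiTerm

theorem summable_pow_mul_pow_choose_two {c r : ℝ} (hc : 0 ≤ c) (hr₀ : 0 ≤ r) (hr : r < 1) :
    Summable fun n : ℕ ↦ c ^ n * r ^ n.choose 2 := by
  refine summable_of_ratio_norm_eventually_le one_half_lt_one ?_
  have : Tendsto (fun n : ℕ ↦ c * r ^ n) atTop (𝓝 0) := by
    simpa using (tendsto_pow_atTop_nhds_zero_of_lt_one hr₀ hr).const_mul c
  filter_upwards [this.eventually_le_const one_half_pos] with n hn
  have h₀ : 0 ≤ c ^ n * r ^ n.choose 2 := by positivity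
  rw [Real.norm_of_nonneg h₀, Real.norm_of_nonneg (by positivity), Nat.choose_succ_succ',
    Nat.choose_one_right, pow_succ, pow_add]
  calc c ^ n * c * (r ^ n * r ^ n.choose 2) = c * r ^ n * (c ^ n * r ^ n.choose 2) := by ring
    _ ≤ 1 / 2 * (c ^ n * r ^ n.choose 2) := mul_le_mul_of_nonneg_right hn h₀

section Analysis

variable {K : Type*} [NormedField K] {q : K}

theorem summable_norm_jacobiTerm (hq : ‖q‖ < 1) (hq₀ : q ≠ 0) (z : K) :
    Summable fun m : ℤ ↦ ‖jacobiTerm q z m‖ := by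
  have h : ∀ w : K, Summable fun n : ℕ ↦ ‖jacobiTerm q w n‖ := fun w ↦ by
    simpa [jacobiTerm_natCast, norm_pow] using
      summable_pow_mul_pow_choose_two (norm_nonneg w) (norm_nonneg q) hq
  exact .of_nat_of_neg (h z) (by simpa [jacobiTerm_neg hq₀] using h (q * z⁻¹))

theorem summable_norm_pow_succ_mul (hq : ‖q‖ < 1) (w : K) :
    Summable fun i : ℕ ↦ ‖q ^ (i + 1) * w‖ := by
  simpa [norm_mul, norm_pow] using
    ((summable_nat_add_iff 1).2 (summable_geometric_of_lt_one (norm_nonneg q) hq)).mul_right ‖w‖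

theorem one_sub_pow_succ_ne_zero (hq : ‖q‖ < 1) (i : ℕ) : 1 - q ^ (i + 1) ≠ 0 := fun h ↦
  (pow_lt_one₀ (norm_nonneg q) hq i.succ_ne_zero).ne <| by
    rw [← norm_pow, ← sub_eq_zero.1 h, norm_one]

theorem qPoch_ne_zero (hq : ‖q‖ < 1) (n : ℕ) : qPoch q n ≠ 0 :=
  prod_ne_zero_iff.2 fun i _ ↦ one_sub_pow_succ_ne_zero hq i

theorem one_sub_mul_prod_jacobiFactor_eq_tsum (hq₀ : q ≠ 0) {z : K} (hz : z ≠ 0) (M : ℕ) :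
    (1 - z) * ∏ i ∈ range M, jacobiFactor q z i =
      ∑' m : ℤ, jacobiTerm q z m * (qPoch q M * qBinomInt q (2 * M + 1) (m + M)) := by
  have h := prod_mul_prod_eq_tsum_jacobiTerm hq₀ hz M (M + 1)
  rw [prod_range_succ', show M + (M + 1) = 2 * M + 1 by ring] at h
  simp_rw [mul_left_comm (jacobiTerm q z _)]
  rw [tsum_mul_left, ← h, qPoch]
  simp only [jacobiFactor, prod_mul_distrib, pow_zero, one_mul]
  ring

variable [CompleteSpace K]

theorem multipliable_one_sub_pow_succ_mul (hq : ‖q‖ < 1) (w : K) :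
    Multipliable fun i : ℕ ↦ 1 - q ^ (i + 1) * w := by
  simpa [sub_eq_add_neg] using
    multipliable_one_add_of_summable (f := fun i ↦ -(q ^ (i + 1) * w))
      (by simpa using summable_norm_pow_succ_mul hq w)

theorem tprod_one_sub_pow_succ_ne_zero (hq : ‖q‖ < 1) : ∏' i : ℕ, (1 - q ^ (i + 1)) ≠ 0 := by
  simpa [sub_eq_add_neg] using
    tprod_one_add_ne_zero_of_summable (f := fun i ↦ -q ^ (i + 1))
      (fun i ↦ by simpa [sub_eq_add_neg] using one_sub_pow_succ_ne_zero hq i)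
      (by simpa using summable_norm_pow_succ_mul hq 1)

theorem tendsto_qPoch (hq : ‖q‖ < 1) :
    Tendsto (qPoch q) atTop (𝓝 (∏' i : ℕ, (1 - q ^ (i + 1)))) := by
  have h := (multipliable_one_sub_pow_succ_mul hq 1).hasProd.tendsto_prod_nat
  simp only [mul_one] at h
  exact h

theorem exists_norm_qPoch_le (hq : ‖q‖ < 1) : ∃ C, ∀ n, ‖qPoch q n‖ ≤ C := by
  obtain ⟨C, hC⟩ := (Metric.isBounded_range_of_tendsto _ (tendsto_qPoch hq)).exists_norm_le
  exact ⟨C, fun n ↦ hC _ ⟨n, rfl⟩⟩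

theorem exists_norm_qBinomInt_le (hq : ‖q‖ < 1) : ∃ C, ∀ n k, ‖qBinomInt q n k‖ ≤ C := by
  obtain ⟨A, hA⟩ := exists_norm_qPoch_le hq
  obtain ⟨B, hB⟩ := (Metric.isBounded_range_of_tendsto _
    ((tendsto_qPoch hq).inv₀ (tprod_one_sub_pow_succ_ne_zero hq))).exists_norm_le
  have hA₀ : 0 ≤ A := (norm_nonneg _).trans (hA 0)
  have hB₀ : 0 ≤ B := (norm_nonneg _).trans (hB _ ⟨0, rfl⟩)
  refine ⟨A * B * B, fun n k ↦ ?_⟩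
  rcases k with k | k
  · rcases le_or_gt k n with hkn | hnk
    · obtain ⟨l, rfl⟩ := Nat.exists_eq_add_of_le hkn
      rw [Int.ofNat_eq_natCast, qBinomInt_natCast, qBinom_add_eq (qPoch_ne_zero hq k)
        (qPoch_ne_zero hq l), div_eq_mul_inv, mul_inv, ← mul_assoc, norm_mul, norm_mul]
      gcongr
      exacts [hA _, hB _ ⟨k, rfl⟩, hB _ ⟨l, rfl⟩]
    · rw [Int.ofNat_eq_natCast, qBinomInt_natCast, qBinom_eq_zero_of_lt q hnk, norm_zero]
      positivity
  · rw [qBinomInt, norm_zero]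
    positivity

theorem tendsto_qPoch_mul_qBinomInt (hq : ‖q‖ < 1) (m : ℤ) :
    Tendsto (fun M : ℕ ↦ qPoch q M * qBinomInt q (2 * M + 1) (m + M)) atTop (𝓝 1) := by
  set P := ∏' i : ℕ, (1 - q ^ (i + 1))
  have hP : P ≠ 0 := tprod_one_sub_pow_succ_ne_zero hq
  have hlim {u : ℕ → ℕ} (hu : Tendsto u atTop atTop) :
      Tendsto (fun M ↦ qPoch q (u M)) atTop (𝓝 P) := (tendsto_qPoch hq).comp hu
  have hk_lim : Tendsto (fun M : ℕ ↦ (m + M).toNat) atTop atTop :=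
    tendsto_atTop_atTop.2 fun b ↦ ⟨b + m.natAbs, fun M hM ↦ by omega⟩
  have hl_lim : Tendsto (fun M : ℕ ↦ (M + 1 - m).toNat) atTop atTop :=
    tendsto_atTop_atTop.2 fun b ↦ ⟨b + m.natAbs, fun M hM ↦ by omega⟩
  have hn_lim : Tendsto (fun M : ℕ ↦ 2 * M + 1) atTop atTop :=
    tendsto_atTop_atTop.2 fun b ↦ ⟨b, fun M hM ↦ by omega⟩
  have key := ((hlim tendsto_id).mul (hlim hn_lim)).div ((hlim hk_lim).mul (hlim hl_lim))
    (mul_ne_zero hP hP)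
  rw [div_self (mul_ne_zero hP hP)] at key
  refine key.congr' ?_
  filter_upwards [eventually_ge_atTop m.natAbs] with M hM
  simp only [Pi.div_apply, id]
  set k := (m + M).toNat with hk
  set l := (M + 1 - m).toNat with hl
  have h₁ : m + M = k := by omega
  have h₂ : 2 * M + 1 = k + l := by omega
  rw [h₁, h₂, qBinomInt_natCast, qBinom_add_eq (qPoch_ne_zero hq _) (qPoch_ne_zero hq _)]
  ring

theorem multipliable_jacobiFactor (hq : ‖q‖ < 1) (z : K) : Multipliable (jacobiFactor q z) :=
  (((multipliable_one_sub_pow_succ_mul hq 1).mul (multipliable_one_sub_pow_succ_mul hq z)).mul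
    (multipliable_one_sub_pow_succ_mul hq z⁻¹)).congr fun i ↦ by rw [mul_one, jacobiFactor]

end Analysis

/-- Jacobi triple product: the bilateral theta series equals the infinite product
`(1-z) ∏_{i=1}^∞ (1-q^i)(1-q^i z)(1-q^i z⁻¹)`. -/
theorem jacobi_triple_product (q z : ℂ) (hq : ‖q‖ < 1) (hz : z ≠ 0) :
    (∑' k : ℤ, (-1) ^ k * z ^ k * q ^ (k * (k - 1) / 2)) =
      (1 - z) * ∏' i : ℕ, ((1 - q ^ (i + 1)) * (1 - q ^ (i + 1) * z) *
        (1 - q ^ (i + 1) * z⁻¹)) := by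
  change ∑' k, jacobiTerm q z k = (1 - z) * ∏' i, jacobiFactor q z i
  rcases eq_or_ne q 0 with rfl | hq₀
  · simp [tsum_jacobiTerm_zero_left, jacobiFactor]
  obtain ⟨A, hA⟩ := exists_norm_qPoch_le hq
  obtain ⟨C, hC⟩ := exists_norm_qBinomInt_le hq
  have hsum := tendsto_tsum_of_dominated_convergence
    ((summable_norm_jacobiTerm hq hq₀ z).mul_right (A * C))
    (fun m ↦ (tendsto_qPoch_mul_qBinomInt hq m).const_mul (jacobiTerm q z m))
    (.of_forall fun M m ↦ by
      rw [norm_mul, norm_mul]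
      gcongr
      exacts [(norm_nonneg _).trans (hA 0), hA M, hC _ _])
  simp only [mul_one, ← one_sub_mul_prod_jacobiFactor_eq_tsum hq₀ hz] at hsum
  exact tendsto_nhds_unique hsum
    (((multipliable_jacobiFactor hq z).hasProd.tendsto_prod_nat).const_mul (1 - z))
end

section
/- Let g(z) = ∑_{k∈ℤ} (-1)^k z^k q^{k(k-1)/2} and f(z₁,z₂) = ∑_{i∈ℤ} (-1)^i q^{i(3i-1)/2}(z₁^{3i} z₂^{1-3i} + z₁^{1-3i} z₂^{3i}). Then for all nonzero z₁,z₂,z₃: z₁² g(z₂z₃/z₁²) f(z₂,z₃) + z₂² g(z₃z₁/z₂²) f(z₃,z₁) + z₃² g(z₁z₂/z₃²) f(z₁,z₂) = 0. -/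
/-- Theta function `g(z) = ∑_{k∈ℤ} (-1)^k z^k q^{k(k-1)/2}`. -/
noncomputable def theta (q z : ℂ) : ℂ := ∑' k : ℤ, (-1) ^ k * z ^ k * q ^ (k * (k - 1) / 2)

/-- `f(z₁,z₂) = ∑_{i∈ℤ} (-1)^i q^{i(3i-1)/2} (z₁^{3i} z₂^{1-3i} + z₁^{1-3i} z₂^{3i})`. -/
noncomputable def fdef (q z₁ z₂ : ℂ) : ℂ :=
  ∑' i : ℤ, (-1) ^ i * q ^ (i * (3 * i - 1) / 2) *
    (z₁ ^ (3 * i) * z₂ ^ (1 - 3 * i) + z₁ ^ (1 - 3 * i) * z₂ ^ (3 * i))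

/-!
Expanding `x² g(yz/x²) f(y,z)` as a double series over `(j,i) ∈ ℤ²` produces, for the two
orderings `(x,y,z)` and `(x,z,y)`, the monomials `±q^e x^a y^b z^c` with
`(a,b,c) = (2-2j, j+3i, j+1-3i)` and `e = j(j-1)/2 + i(3i-1)/2 = (a²+b²+c²-5)/12`. Since `e` is
symmetric in the exponent triple, a term can cancel against the term of a rotated ordering carrying
the same monomial: for `j+i` even, the `(j,i)`-term of `(x,y,z)` is minus the `(j',i')`-term of
`(y,z,x)`, where `2j' = 2-j-3i`, `2i' = j-i`, and this is a bijection onto the indices with `j'+i'`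
odd. Over the six orderings of `(z₁,z₂,z₃)` the even part of each ordering therefore cancels the
odd part of its rotation.
-/

open Filter Topology

lemma summable_pow_mul_pow_of_add_le {a r : ℝ} (ha : 0 ≤ a) (hr₀ : 0 ≤ r) (hr : r < 1)
    {e : ℕ → ℕ} (he : ∀ n, e n + n ≤ e (n + 1)) :
    Summable fun n => a ^ n * r ^ e n := by
  refine summable_of_ratio_norm_eventually_le (r := 1 / 2) (by norm_num) ?_
  have hlim : Tendsto (fun n => a * r ^ n) atTop (𝓝 0) := by
    simpa using (tendsto_pow_atTop_nhds_zero_of_lt_one hr₀ hr).const_mul a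
  filter_upwards [hlim.eventually_le_const (by norm_num : (0 : ℝ) < 1 / 2)] with n hn
  simp only [Real.norm_of_nonneg (by positivity : 0 ≤ a ^ _ * r ^ _)]
  calc a ^ (n + 1) * r ^ e (n + 1)
      ≤ a ^ (n + 1) * r ^ (e n + n) :=
          mul_le_mul_of_nonneg_left (pow_le_pow_of_le_one hr₀ hr.le (he n)) (by positivity)
    _ = a * r ^ n * (a ^ n * r ^ e n) := by ring
    _ ≤ 1 / 2 * (a ^ n * r ^ e n) := by gcongr

lemma summable_norm_pow_mul_zpow {w q : ℂ} (hq : ‖q‖ < 1) {e : ℕ → ℤ}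
    (he₀ : ∀ n, 0 ≤ e n) (he : ∀ n, e n + n ≤ e (n + 1)) :
    Summable fun n : ℕ => ‖w ^ n * q ^ e n‖ := by
  have h := summable_pow_mul_pow_of_add_le (norm_nonneg w) (norm_nonneg q) hq
    (e := fun n => (e n).toNat) (fun n => by have := he n; have := he₀ n; omega)
  refine h.congr fun n => ?_
  rw [norm_mul, norm_pow, norm_zpow, ← zpow_natCast ‖q‖, Int.toNat_of_nonneg (he₀ n)]

lemma summable_norm_zpow_mul_zpow {w q : ℂ} (hq : ‖q‖ < 1) {e : ℤ → ℤ} (he₀ : ∀ k, 0 ≤ e k)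
    (he_pos : ∀ n : ℕ, e n + n ≤ e (n + 1)) (he_neg : ∀ n : ℕ, e (-n) + n ≤ e (-n - 1)) :
    Summable fun k : ℤ => ‖w ^ k * q ^ e k‖ := by
  refine .of_nat_of_neg ?_ ?_
  · simpa only [zpow_natCast] using
      summable_norm_pow_mul_zpow (w := w) hq (fun n => he₀ n) (fun n => mod_cast he_pos n)
  · simpa only [zpow_neg, zpow_natCast, inv_pow] using
      summable_norm_pow_mul_zpow (w := w⁻¹) hq (fun n => he₀ _)
        (fun n => by rw [Nat.cast_succ, neg_add']; exact he_neg n)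

lemma triangular_nonneg (k : ℤ) : 0 ≤ k * (k - 1) / 2 := by
  rcases le_or_gt 1 k with hk | hk <;> exact Int.ediv_nonneg (by nlinarith) two_pos.le

lemma pentagonal_nonneg (k : ℤ) : 0 ≤ k * (3 * k - 1) / 2 := by
  rcases le_or_gt 1 k with hk | hk <;> exact Int.ediv_nonneg (by nlinarith) two_pos.le

lemma summable_norm_zpow_mul_zpow_triangular {q : ℂ} (w : ℂ) (hq : ‖q‖ < 1) :
    Summable fun k : ℤ => ‖w ^ k * q ^ (k * (k - 1) / 2)‖ := by
  refine summable_norm_zpow_mul_zpow hq triangular_nonneg (fun n => ?_) (fun n => ?_)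
  · rw [show ((n : ℤ) + 1) * (n + 1 - 1) = n * (n - 1) + 2 * n by ring,
      Int.add_mul_ediv_left _ _ two_ne_zero]
  · rw [show (-(n : ℤ) - 1) * (-n - 1 - 1) = -n * (-n - 1) + 2 * (n + 1) by ring,
      Int.add_mul_ediv_left _ _ two_ne_zero]
    omega

lemma summable_norm_zpow_mul_zpow_pentagonal {q : ℂ} (w : ℂ) (hq : ‖q‖ < 1) :
    Summable fun k : ℤ => ‖w ^ k * q ^ (k * (3 * k - 1) / 2)‖ := by
  refine summable_norm_zpow_mul_zpow hq pentagonal_nonneg (fun n => ?_) (fun n => ?_)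
  · rw [show ((n : ℤ) + 1) * (3 * (n + 1) - 1) = n * (3 * n - 1) + 2 * (3 * n + 1) by ring,
      Int.add_mul_ediv_left _ _ two_ne_zero]
    omega
  · rw [show (-(n : ℤ) - 1) * (3 * (-n - 1) - 1) = -n * (3 * -n - 1) + 2 * (3 * n + 2) by ring,
      Int.add_mul_ediv_left _ _ two_ne_zero]
    omega

noncomputable def productTerm (q x y z : ℂ) (p : ℤ × ℤ) : ℂ :=
  (-1) ^ (p.1 + p.2) * q ^ (p.1 * (p.1 - 1) / 2 + p.2 * (3 * p.2 - 1) / 2) *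
    x ^ (2 - 2 * p.1) * y ^ (p.1 + 3 * p.2) * z ^ (p.1 + 1 - 3 * p.2)

lemma productTerm_eq_mul {q x y z : ℂ} (hx : x ≠ 0) (hy : y ≠ 0) (hz : z ≠ 0) (p : ℤ × ℤ) :
    productTerm q x y z p =
      x ^ 2 * z * ((-(y * z / x ^ 2)) ^ p.1 * q ^ (p.1 * (p.1 - 1) / 2)) *
        ((-(y / z) ^ 3) ^ p.2 * q ^ (p.2 * (3 * p.2 - 1) / 2)) := by
  obtain ⟨j, i⟩ := p
  have hq : q ^ (j * (j - 1) / 2 + i * (3 * i - 1) / 2) =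
      q ^ (j * (j - 1) / 2) * q ^ (i * (3 * i - 1) / 2) := by
    have := triangular_nonneg j; have := pentagonal_nonneg i
    exact zpow_add' (.inr (by omega))
  rw [neg_eq_neg_one_mul (y * z / x ^ 2), neg_eq_neg_one_mul ((y / z) ^ 3)]
  simp only [productTerm, hq, mul_zpow, div_eq_mul_inv, mul_pow, inv_pow, inv_zpow,
    zpow_add₀ (neg_ne_zero.2 one_ne_zero : (-1 : ℂ) ≠ 0), zpow_add₀ hy, zpow_add₀ hz,
    zpow_sub₀ hx, zpow_sub₀ hz, zpow_mul, zpow_one]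
  field_simp

lemma summable_norm_productTerm {q x y z : ℂ} (hq : ‖q‖ < 1) (hx : x ≠ 0) (hy : y ≠ 0)
    (hz : z ≠ 0) : Summable fun p => ‖productTerm q x y z p‖ := by
  have h := (summable_norm_zpow_mul_zpow_triangular (-(y * z / x ^ 2)) hq).mul_norm
    (summable_norm_zpow_mul_zpow_pentagonal (-(y / z) ^ 3) hq)
  refine (h.mul_left ‖x ^ 2 * z‖).congr fun p => ?_
  rw [productTerm_eq_mul hx hy hz, mul_assoc (x ^ 2 * z), norm_mul (x ^ 2 * z)]

lemma tsum_productTerm {q x y z : ℂ} (hq : ‖q‖ < 1) (hx : x ≠ 0) (hy : y ≠ 0) (hz : z ≠ 0) :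
    ∑' p, productTerm q x y z p =
      x ^ 2 * z * ((∑' j : ℤ, (-(y * z / x ^ 2)) ^ j * q ^ (j * (j - 1) / 2)) *
        ∑' i : ℤ, (-(y / z) ^ 3) ^ i * q ^ (i * (3 * i - 1) / 2)) := by
  rw [tsum_mul_tsum_of_summable_norm (summable_norm_zpow_mul_zpow_triangular _ hq)
    (summable_norm_zpow_mul_zpow_pentagonal _ hq), ← tsum_mul_left]
  exact tsum_congr fun p => by rw [productTerm_eq_mul hx hy hz, mul_assoc]

lemma theta_eq_tsum (q w : ℂ) :
    theta q w = ∑' k : ℤ, (-w) ^ k * q ^ (k * (k - 1) / 2) := by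
  simp only [theta, neg_eq_neg_one_mul w, mul_zpow]

lemma fdef_eq_add {q y z : ℂ} (hq : ‖q‖ < 1) (hy : y ≠ 0) (hz : z ≠ 0) :
    fdef q y z = z * ∑' i : ℤ, (-(y / z) ^ 3) ^ i * q ^ (i * (3 * i - 1) / 2) +
      y * ∑' i : ℤ, (-(z / y) ^ 3) ^ i * q ^ (i * (3 * i - 1) / 2) := by
  rw [← tsum_mul_left, ← tsum_mul_left, ← Summable.tsum_add
    ((summable_norm_zpow_mul_zpow_pentagonal _ hq).of_norm.mul_left z)
    ((summable_norm_zpow_mul_zpow_pentagonal _ hq).of_norm.mul_left y)]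
  refine tsum_congr fun i => ?_
  rw [neg_eq_neg_one_mul ((y / z) ^ 3), neg_eq_neg_one_mul ((z / y) ^ 3)]
  simp only [mul_zpow, div_pow, div_zpow, zpow_sub₀ hy, zpow_sub₀ hz, zpow_one, zpow_mul]
  field_simp

lemma mul_theta_mul_fdef {q x y z : ℂ} (hq : ‖q‖ < 1) (hx : x ≠ 0) (hy : y ≠ 0) (hz : z ≠ 0) :
    x ^ 2 * theta q (y * z / x ^ 2) * fdef q y z =
      ∑' p, productTerm q x y z p + ∑' p, productTerm q x z y p := by
  rw [tsum_productTerm hq hx hy hz, tsum_productTerm hq hx hz hy, theta_eq_tsum,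
    fdef_eq_add hq hy hz, mul_comm z y]
  ring

def evenPairs : Set (ℤ × ℤ) := {p | (p.1 + p.2) % 2 = 0}

def evenPairsEquivCompl : evenPairs ≃ (evenPairsᶜ : Set (ℤ × ℤ)) where
  toFun p := ⟨(1 - (p.1.1 + 3 * p.1.2) / 2, (p.1.1 - p.1.2) / 2), by
    have := p.2; simp only [evenPairs, Set.mem_compl_iff, Set.mem_ofPred_eq] at this ⊢; omega⟩
  invFun p := ⟨((1 - p.1.1 + 3 * p.1.2) / 2, (1 - p.1.2 - p.1.1) / 2), by
    have := p.2; simp only [evenPairs, Set.mem_compl_iff, Set.mem_ofPred_eq] at this ⊢; omega⟩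
  left_inv p := by
    have := p.2; simp only [evenPairs, Set.mem_ofPred_eq] at this
    ext <;> dsimp only <;> omega
  right_inv p := by
    have := p.2; simp only [evenPairs, Set.mem_compl_iff, Set.mem_ofPred_eq] at this
    ext <;> dsimp only <;> omega

lemma productTerm_rotate (q x y z : ℂ) {j i j' i' : ℤ} (hj : 2 * j' = 2 - j - 3 * i)
    (hi : 2 * i' = j - i) :
    productTerm q y z x (j', i') = -productTerm q x y z (j, i) := by
  have hexp :
      j' * (j' - 1) / 2 + i' * (3 * i' - 1) / 2 = j * (j - 1) / 2 + i * (3 * i - 1) / 2 := by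
    have h2 (n : ℤ) : 2 * (n * (n - 1) / 2) = n * (n - 1) :=
      Int.two_mul_ediv_two_of_even (Int.even_mul_pred_self n)
    have h3 (n : ℤ) : 2 * (n * (3 * n - 1) / 2) = n * (3 * n - 1) := by
      refine Int.two_mul_ediv_two_of_even ?_
      rw [show n * (3 * n - 1) = n * (n - 1) + 2 * (n * n) by ring]
      exact (Int.even_mul_pred_self n).add (even_two_mul _)
    -- both sides are `(a² + b² + c² - 5) / 12` for the same exponent triple `(a, b, c)`
    refine mul_left_cancel₀ (by norm_num : (8 : ℤ) ≠ 0) ?_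
    linear_combination 4 * h2 j' + 4 * h3 i' - 4 * h2 j - 4 * h3 i +
      (2 * j' - j - 3 * i) * hj + (6 * i' + 3 * j - 3 * i - 2) * hi
  have hsign : ((-1 : ℂ)) ^ (j' + i') = -1 := Odd.neg_one_zpow ⟨-i, by omega⟩
  have hsign' : ((-1 : ℂ)) ^ (j + i) = 1 := Even.neg_one_zpow ⟨i' + i, by omega⟩
  simp only [productTerm, hexp, hsign, hsign', show 2 - 2 * j' = j + 3 * i by omega,
    show j' + 3 * i' = j + 1 - 3 * i by omega, show j' + 1 - 3 * i' = 2 - 2 * j by omega]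
  ring

lemma tsum_evenPairs_add_tsum_compl_rotate (q x y z : ℂ) :
    ∑' p : evenPairs, productTerm q x y z p + ∑' p : ↥evenPairsᶜ, productTerm q y z x p = 0 := by
  have hpair (p : evenPairs) :
      productTerm q y z x (evenPairsEquivCompl p) = -productTerm q x y z p := by
    obtain ⟨⟨j, i⟩, hp⟩ := p
    simp only [evenPairs, Set.mem_ofPred_eq] at hp
    change productTerm q y z x (1 - (j + 3 * i) / 2, (j - i) / 2) = _
    exact productTerm_rotate q x y z (by omega) (by omega)
  rw [← evenPairsEquivCompl.tsum_eq, tsum_congr hpair, tsum_neg, add_neg_cancel]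

lemma tsum_productTerm_eq_add_compl {q x y z : ℂ} (hq : ‖q‖ < 1) (hx : x ≠ 0) (hy : y ≠ 0)
    (hz : z ≠ 0) :
    ∑' p, productTerm q x y z p =
      ∑' p : evenPairs, productTerm q x y z p + ∑' p : ↥evenPairsᶜ, productTerm q x y z p :=
  have hs := (summable_norm_productTerm hq hx hy hz).of_norm
  ((hs.subtype _).tsum_add_tsum_compl (hs.subtype _)).symm

theorem functional_equation (q z₁ z₂ z₃ : ℂ) (hq : ‖q‖ < 1)
    (h₁ : z₁ ≠ 0) (h₂ : z₂ ≠ 0) (h₃ : z₃ ≠ 0) :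
    z₁ ^ 2 * theta q (z₂ * z₃ / z₁ ^ 2) * fdef q z₂ z₃ +
      z₂ ^ 2 * theta q (z₃ * z₁ / z₂ ^ 2) * fdef q z₃ z₁ +
      z₃ ^ 2 * theta q (z₁ * z₂ / z₃ ^ 2) * fdef q z₁ z₂ = 0 := by
  rw [mul_theta_mul_fdef hq h₁ h₂ h₃, mul_theta_mul_fdef hq h₂ h₃ h₁,
    mul_theta_mul_fdef hq h₃ h₁ h₂, tsum_productTerm_eq_add_compl hq h₁ h₂ h₃,
    tsum_productTerm_eq_add_compl hq h₁ h₃ h₂, tsum_productTerm_eq_add_compl hq h₂ h₃ h₁,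
    tsum_productTerm_eq_add_compl hq h₂ h₁ h₃, tsum_productTerm_eq_add_compl hq h₃ h₁ h₂,
    tsum_productTerm_eq_add_compl hq h₃ h₂ h₁]
  linear_combination tsum_evenPairs_add_tsum_compl_rotate q z₁ z₂ z₃ +
    tsum_evenPairs_add_tsum_compl_rotate q z₂ z₃ z₁ +
    tsum_evenPairs_add_tsum_compl_rotate q z₃ z₁ z₂ +
    tsum_evenPairs_add_tsum_compl_rotate q z₁ z₃ z₂ +
    tsum_evenPairs_add_tsum_compl_rotate q z₃ z₂ z₁ +
    tsum_evenPairs_add_tsum_compl_rotate q z₂ z₁ z₃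
end

section
/- In the polynomial ring P̄ = ℂ[xᵢ, ȳᵢ : i ∈ ℤ], for every monomial u there exists a reduced monomial v that is a reduction of u, and v is unique. -/
/-- A monomial in `P̄ = ℂ[xᵢ, ȳᵢ : i ∈ ℤ]`, recorded by its exponent vectors:
`u.1 i` is the exponent of `xᵢ` and `u.2 i` is the exponent of `ȳᵢ`. -/
abbrev Mono : Type := (ℤ →₀ ℕ) × (ℤ →₀ ℕ)

/-- Move of type 1: replace a factor `xᵢ xᵢ₊₁` by `ȳᵢ`. -/
def Step1 (u v : Mono) : Prop :=
  ∃ i : ℤ, 1 ≤ u.1 i ∧ 1 ≤ u.1 (i + 1) ∧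
    v.1 = u.1 - Finsupp.single i 1 - Finsupp.single (i + 1) 1 ∧
    v.2 = u.2 + Finsupp.single i 1

/-- Move of type 2: replace a factor `xᵢ ȳᵢ₊₁` by `xᵢ₊₂ ȳᵢ`. -/
def Step2 (u v : Mono) : Prop :=
  ∃ i : ℤ, 1 ≤ u.1 i ∧ 1 ≤ u.2 (i + 1) ∧
    v.1 = u.1 - Finsupp.single i 1 + Finsupp.single (i + 2) 1 ∧
    v.2 = u.2 - Finsupp.single (i + 1) 1 + Finsupp.single i 1

/-- One reduction move. -/
def Step (u v : Mono) : Prop := Step1 u v ∨ Step2 u v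

/-- `v` is a reduction of `u`: `v` is obtained from `u` by a finite (possibly empty)
sequence of moves. -/
def IsReduction (u v : Mono) : Prop := Relation.ReflTransGen Step u v

/-- A monomial is reduced if it is divisible by no `xᵢ xᵢ₊₁` and no `xᵢ ȳᵢ₊₁`. -/
def Reduced (u : Mono) : Prop :=
  ∀ i : ℤ, ¬(1 ≤ u.1 i ∧ 1 ≤ u.1 (i + 1)) ∧ ¬(1 ≤ u.1 i ∧ 1 ≤ u.2 (i + 1))

/-- The monomial of `P̄ = ℂ[xᵢ, ȳᵢ]` (variables indexed by `ℤ ⊕ ℤ`, with `Sum.inl i ↦ xᵢ`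
and `Sum.inr i ↦ ȳᵢ`) corresponding to `u`. -/
noncomputable def monoPoly (u : Mono) : MvPolynomial (ℤ ⊕ ℤ) ℂ :=
  MvPolynomial.monomial (u.1.mapDomain Sum.inl + u.2.mapDomain Sum.inr) 1

/-- The homomorphism `φ : P̄ → P`, `φ(xᵢ) = xᵢ`, `φ(ȳᵢ) = xᵢ xᵢ₊₁`. -/
noncomputable def phi : MvPolynomial (ℤ ⊕ ℤ) ℂ →ₐ[ℂ] MvPolynomial ℤ ℂ :=
  MvPolynomial.aeval (Sum.elim (fun i => MvPolynomial.X i)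
    (fun i => MvPolynomial.X i * MvPolynomial.X (i + 1)))

def cInv (u : Mono) (i : ℤ) : ℕ := u.1 i + u.2 i + u.2 (i - 1)

lemma sng (i k : ℤ) : (Finsupp.single i 1 : ℤ →₀ ℕ) k = if i = k then 1 else 0 :=
  Finsupp.single_apply

lemma step_cInv {u v : Mono} (h : Step u v) : cInv v = cInv u := by
  funext k
  rcases h with ⟨i, h1, h2, hv1, hv2⟩ | ⟨i, h1, h2, hv1, hv2⟩
  · rcases eq_or_ne k i with rfl | hk1
    · simp only [cInv, hv1, hv2, Finsupp.tsub_apply, Finsupp.add_apply, sng]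
      split_ifs <;> omega
    rcases eq_or_ne k (i + 1) with rfl | hk2
    · simp only [cInv, hv1, hv2, Finsupp.tsub_apply, Finsupp.add_apply, sng]
      rw [show (i:ℤ) + 1 - 1 = i from by ring]
      split_ifs <;> omega
    · simp only [cInv, hv1, hv2, Finsupp.tsub_apply, Finsupp.add_apply, sng]
      split_ifs <;> omega
  · rcases eq_or_ne k i with rfl | hk1
    · simp only [cInv, hv1, hv2, Finsupp.tsub_apply, Finsupp.add_apply, sng]
      split_ifs <;> omega
    rcases eq_or_ne k (i + 1) with rfl | hk2
    · simp only [cInv, hv1, hv2, Finsupp.tsub_apply, Finsupp.add_apply, sng]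
      rw [show (i:ℤ) + 1 - 1 = i from by ring]
      split_ifs <;> omega
    rcases eq_or_ne k (i + 2) with rfl | hk3
    · simp only [cInv, hv1, hv2, Finsupp.tsub_apply, Finsupp.add_apply, sng]
      rw [show (i:ℤ) + 2 - 1 = i + 1 from by ring]
      split_ifs <;> omega
    · simp only [cInv, hv1, hv2, Finsupp.tsub_apply, Finsupp.add_apply, sng]
      split_ifs <;> omega

def degA (f : ℤ →₀ ℕ) : ℕ := f.sum fun _ n => n
def W (L : ℤ) (f : ℤ →₀ ℕ) : ℕ := f.sum fun j n => n * (j - L).toNat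

lemma sum_add' (f g : ℤ →₀ ℕ) (h : ℤ → ℕ → ℕ) (h0 : ∀ a, h a 0 = 0)
    (hadd : ∀ a b c, h a (b + c) = h a b + h a c) :
    (f + g).sum h = f.sum h + g.sum h := Finsupp.sum_add_index' h0 hadd

lemma degA_add (f : ℤ →₀ ℕ) (i : ℤ) :
    degA (f + Finsupp.single i 1) = degA f + 1 := by
  rw [degA, sum_add' _ _ _ (fun _ => rfl) (fun _ _ _ => rfl),
    Finsupp.sum_single_index rfl]
  rfl

lemma W_add (L : ℤ) (f : ℤ →₀ ℕ) (i : ℤ) :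
    W L (f + Finsupp.single i 1) = W L f + (i - L).toNat := by
  rw [W, sum_add' _ _ _ (fun _ => by simp) (fun _ _ _ => by ring),
    Finsupp.sum_single_index (by simp), one_mul]
  rfl

lemma exists_red_aux : ∀ dA dW : ℕ, ∀ L : ℤ, ∀ u : Mono,
    (∀ j, j < L → u.1 j = 0 ∧ u.2 j = 0) → degA u.1 ≤ dA → W L u.2 ≤ dW →
    ∃ v, Reduced v ∧ IsReduction u v := by
  intro dA
  induction dA using Nat.strong_induction_on with
  | _ dA ihA =>
  intro dW
  induction dW using Nat.strong_induction_on with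
  | _ dW ihW =>
  intro L u hLB hA hW
  by_cases hr : Reduced u
  · exact ⟨u, hr, Relation.ReflTransGen.refl⟩
  have hr' : ∃ i : ℤ, (1 ≤ u.1 i ∧ 1 ≤ u.1 (i + 1)) ∨ (1 ≤ u.1 i ∧ 1 ≤ u.2 (i + 1)) := by
    by_contra hc
    push_neg at hc
    refine hr fun i => ⟨?_, ?_⟩ <;> · have := hc i; omega
  obtain ⟨i, ⟨h1, h2⟩ | ⟨h1, h2⟩⟩ := hr'
  · -- Step1
    set v : Mono := (u.1 - Finsupp.single i 1 - Finsupp.single (i + 1) 1,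
      u.2 + Finsupp.single i 1) with hv
    have hstep : Step u v := Or.inl ⟨i, h1, h2, rfl, rfl⟩
    have hre : u.1 = v.1 + Finsupp.single i 1 + Finsupp.single (i + 1) 1 := by
      ext k
      rcases eq_or_ne k i with rfl | hk1
      · simp only [hv, Finsupp.tsub_apply, Finsupp.add_apply, sng]
        split_ifs <;> omega
      rcases eq_or_ne k (i + 1) with rfl | hk2
      · simp only [hv, Finsupp.tsub_apply, Finsupp.add_apply, sng]
        split_ifs <;> omega
      · simp only [hv, Finsupp.tsub_apply, Finsupp.add_apply, sng]
        split_ifs <;> omega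
    have hdeg : degA u.1 = degA v.1 + 2 := by
      rw [hre, degA_add, degA_add]
    have hLB' : ∀ j, j < L → v.1 j = 0 ∧ v.2 j = 0 := by
      intro j hj
      have hu := hLB j hj
      have hji : j ≠ i := by rintro rfl; omega
      have hji1 : j ≠ i + 1 := by rintro rfl; omega
      constructor
      · simp only [hv, Finsupp.tsub_apply, sng]
        split_ifs <;> omega
      · simp only [hv, Finsupp.add_apply, sng]
        split_ifs <;> omega
    obtain ⟨w, hw, hwr⟩ := ihA (degA v.1) (by omega) (W L v.2) L v hLB' le_rfl le_rfl
    exact ⟨w, hw, Relation.ReflTransGen.head hstep hwr⟩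
  · -- Step2
    set v : Mono := (u.1 - Finsupp.single i 1 + Finsupp.single (i + 2) 1,
      u.2 - Finsupp.single (i + 1) 1 + Finsupp.single i 1) with hv
    have hstep : Step u v := Or.inr ⟨i, h1, h2, rfl, rfl⟩
    have hLi : L ≤ i := by
      by_contra hc
      have := hLB i (by omega)
      omega
    have hre1 : u.1 + Finsupp.single (i + 2) 1 = v.1 + Finsupp.single i 1 := by
      ext k
      rcases eq_or_ne k i with rfl | hk1
      · simp only [hv, Finsupp.tsub_apply, Finsupp.add_apply, sng]
        split_ifs <;> omega
      rcases eq_or_ne k (i + 2) with rfl | hk2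
      · simp only [hv, Finsupp.tsub_apply, Finsupp.add_apply, sng]
        split_ifs <;> omega
      · simp only [hv, Finsupp.tsub_apply, Finsupp.add_apply, sng]
        split_ifs <;> omega
    have hre2 : u.2 + Finsupp.single i 1 = v.2 + Finsupp.single (i + 1) 1 := by
      ext k
      rcases eq_or_ne k i with rfl | hk1
      · simp only [hv, Finsupp.tsub_apply, Finsupp.add_apply, sng]
        split_ifs <;> omega
      rcases eq_or_ne k (i + 1) with rfl | hk2
      · simp only [hv, Finsupp.tsub_apply, Finsupp.add_apply, sng]
        split_ifs <;> omega
      · simp only [hv, Finsupp.tsub_apply, Finsupp.add_apply, sng]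
        split_ifs <;> omega
    have hdeg : degA v.1 = degA u.1 := by
      have := congrArg degA hre1
      rw [degA_add, degA_add] at this
      omega
    have hWlt : W L v.2 < W L u.2 := by
      have := congrArg (W L) hre2
      rw [W_add, W_add] at this
      have ht : ((i : ℤ) + 1 - L).toNat = (i - L).toNat + 1 := by omega
      omega
    have hLB' : ∀ j, j < L → v.1 j = 0 ∧ v.2 j = 0 := by
      intro j hj
      have hu := hLB j hj
      have hji : j ≠ i := by rintro rfl; omega
      have hji1 : j ≠ i + 1 := by rintro rfl; omega
      have hji2 : j ≠ i + 2 := by rintro rfl; omega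
      constructor
      · simp only [hv, Finsupp.tsub_apply, Finsupp.add_apply, sng]
        split_ifs <;> omega
      · simp only [hv, Finsupp.tsub_apply, Finsupp.add_apply, sng]
        split_ifs <;> omega
    obtain ⟨w, hw, hwr⟩ := ihW (W L v.2) (by omega) L v hLB' (by omega) le_rfl
    exact ⟨w, hw, Relation.ReflTransGen.head hstep hwr⟩

lemma red_cInv {u v : Mono} (h : IsReduction u v) : cInv v = cInv u := by
  induction h with
  | refl => rfl
  | tail _ hstep ih => rw [step_cInv hstep, ih]

lemma aux_contra {p q : Mono} (hp : Reduced p) (h : cInv p = cInv q) {i : ℤ}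
    (hgt : q.1 i < p.1 i) (hsum : p.1 i + p.2 i = q.1 i + q.2 i) : False := by
  have h1 : 1 ≤ p.1 i := by omega
  have h2 := (hp i).1
  have h3 := (hp i).2
  have hA : p.1 (i + 1) = 0 := by
    by_contra hc
    exact h2 ⟨h1, by omega⟩
  have hB : p.2 (i + 1) = 0 := by
    by_contra hc
    exact h3 ⟨h1, by omega⟩
  have hc := congrFun h (i + 1)
  simp only [cInv] at hc
  rw [show (i:ℤ) + 1 - 1 = i from by ring] at hc
  omega

lemma reduced_inj {p q : Mono} (hp : Reduced p) (hq : Reduced q)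
    (h : cInv p = cInv q) : p = q := by
  by_contra hne
  have key : ∃ i, p.1 i ≠ q.1 i ∨ p.2 i ≠ q.2 i := by
    by_contra hc
    push_neg at hc
    exact hne (Prod.ext (Finsupp.ext fun i => (hc i).1) (Finsupp.ext fun i => (hc i).2))
  set S : Finset ℤ := p.1.support ∪ p.2.support ∪ q.1.support ∪ q.2.support with hS
  have hmemS : ∀ j, (p.1 j ≠ q.1 j ∨ p.2 j ≠ q.2 j) → j ∈ S := by
    intro j hj
    simp only [hS, Finset.mem_union, Finsupp.mem_support_iff]
    omega
  set T : Finset ℤ := S.filter fun i => p.1 i ≠ q.1 i ∨ p.2 i ≠ q.2 i with hT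
  obtain ⟨i0, hi0⟩ := key
  have hTne : T.Nonempty := ⟨i0, Finset.mem_filter.2 ⟨hmemS i0 hi0, hi0⟩⟩
  set m := T.min' hTne with hm
  have hmmem := T.min'_mem hTne
  have hmdiff : p.1 m ≠ q.1 m ∨ p.2 m ≠ q.2 m := (Finset.mem_filter.1 hmmem).2
  have hmlt : ∀ j, j < m → p.1 j = q.1 j ∧ p.2 j = q.2 j := by
    intro j hj
    by_contra hc
    rw [not_and_or] at hc
    have : j ∈ T := Finset.mem_filter.2 ⟨hmemS j hc, hc⟩
    exact absurd (T.min'_le j this) (by omega)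
  have hprev : p.2 (m - 1) = q.2 (m - 1) := (hmlt (m - 1) (by omega)).2
  have hcm := congrFun h m
  simp only [cInv] at hcm
  have hsum : p.1 m + p.2 m = q.1 m + q.2 m := by omega
  rcases lt_trichotomy (p.1 m) (q.1 m) with hlt | heq | hgt
  · exact aux_contra hq h.symm hlt hsum.symm
  · exact absurd (by omega : p.2 m = q.2 m) (by omega)
  · exact aux_contra hp h hgt hsum

theorem exists_unique_reduced_reduction (u : Mono) :
    ∃! v : Mono, Reduced v ∧ IsReduction u v := by
  obtain ⟨L, hL⟩ : ∃ L : ℤ, ∀ j ∈ u.1.support ∪ u.2.support, L ≤ j := by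
    by_cases hS : (u.1.support ∪ u.2.support).Nonempty
    · exact ⟨(u.1.support ∪ u.2.support).min' hS, fun j hj => Finset.min'_le _ j hj⟩
    · exact ⟨0, fun j hj => absurd ⟨j, hj⟩ hS⟩
  have hLB : ∀ j, j < L → u.1 j = 0 ∧ u.2 j = 0 := by
    intro j hj
    constructor <;> by_contra hc
    · exact absurd (hL j (Finset.mem_union_left _ (Finsupp.mem_support_iff.2 hc))) (by omega)
    · exact absurd (hL j (Finset.mem_union_right _ (Finsupp.mem_support_iff.2 hc))) (by omega)
  obtain ⟨v, hv, hred⟩ := exists_red_aux (degA u.1) (W L u.2) L u hLB le_rfl le_rfl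
  refine ⟨v, ⟨hv, hred⟩, ?_⟩
  rintro w ⟨hw, hwred⟩
  exact reduced_inj hw hv ((red_cInv hwred).trans (red_cInv hred).symm)
end

section
/- In P̄ = ℂ[xᵢ, ȳᵢ : i ∈ ℤ], if v and v′ are both reduced monomials and φ(v) = φ(v′), where φ is the algebra homomorphism with φ(xᵢ) = xᵢ and φ(ȳᵢ) = xᵢxᵢ₊₁, then v = v′. -/
open MvPolynomial Finsupp

/-- The exponent vector of `φ(u)`. -/
noncomputable def Wvec (u : Mono) : ℤ →₀ ℕ :=
  u.1 + u.2 + u.2.mapDomain (· + 1)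

lemma add_one_inj : Function.Injective (fun i : ℤ => i + 1) := fun a b h => by
  simpa using h

lemma phi_monoPoly (u : Mono) :
    phi (monoPoly u) = MvPolynomial.monomial (Wvec u) 1 := by
  rw [phi, monoPoly, aeval_monomial, map_one, one_mul,
    Finsupp.prod_add_index' (fun a => pow_zero _) (fun a b c => pow_add _ _ _),
    Finsupp.prod_mapDomain_index_inj Sum.inl_injective,
    Finsupp.prod_mapDomain_index_inj Sum.inr_injective]
  simp only [Sum.elim_inl, Sum.elim_inr]
  have h1 : u.1.prod (fun i n => (X i : MvPolynomial ℤ ℂ) ^ n) = monomial u.1 1 := by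
    rw [monomial_eq, map_one, one_mul]
  have h2 : u.2.prod (fun i n => ((X i : MvPolynomial ℤ ℂ) * X (i+1)) ^ n)
      = monomial u.2 1 * monomial (u.2.mapDomain (· + 1)) 1 := by
    simp only [mul_pow]
    rw [Finsupp.prod, Finset.prod_mul_distrib]
    congr 1
    · rw [monomial_eq, map_one, one_mul]; rfl
    · rw [monomial_eq, map_one, one_mul, Finsupp.prod_mapDomain_index_inj add_one_inj]
      rfl
  rw [h1, h2, Wvec, ← mul_assoc, monomial_mul, monomial_mul, one_mul, one_mul]

lemma key (a b a' b' : ℤ → ℕ)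
    (ha : ∀ i : ℤ, 1 ≤ a i → a (i+1) = 0 ∧ b (i+1) = 0)
    (ha' : ∀ i : ℤ, 1 ≤ a' i → a' (i+1) = 0 ∧ b' (i+1) = 0)
    (hw : ∀ i : ℤ, a (i+1) + b (i+1) + b i = a' (i+1) + b' (i+1) + b' i)
    (N : ℤ) (hN : ∀ i ≤ N, b i = 0 ∧ b' i = 0) :
    ∀ i : ℤ, a i = a' i ∧ b i = b' i := by
  have hb : ∀ i : ℤ, b i = b' i := by
    have step : ∀ i : ℤ, b i = b' i → b (i+1) = b' (i+1) := by
      intro i hi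
      have h1 := hw i
      rcases lt_trichotomy (a (i+1)) (a' (i+1)) with hlt | heq | hgt
      · have h0 := ha' (i+1) (by omega)
        have h2 := hw (i+1)
        omega
      · omega
      · have h0 := ha (i+1) (by omega)
        have h2 := hw (i+1)
        omega
    intro i
    rcases le_or_gt i N with hi | hi
    · exact ((hN i hi).1).trans ((hN i hi).2).symm
    · have : ∀ j : ℤ, N ≤ j → b j = b' j :=
        Int.le_induction (((hN N le_rfl).1).trans ((hN N le_rfl).2).symm)
          (fun n _ ih => step n ih)
      exact this i (by omega)
  intro i
  refine ⟨?_, hb i⟩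
  have h1 := hw (i-1)
  have h2 := hb (i-1)
  have h3 := hb i
  simp only [sub_add_cancel] at h1
  omega

theorem reduced_eq_of_phi_eq (v v' : Mono) (hv : Reduced v) (hv' : Reduced v')
    (h : phi (monoPoly v) = phi (monoPoly v')) : v = v' := by
  rw [phi_monoPoly, phi_monoPoly] at h
  have hW : Wvec v = Wvec v' := MvPolynomial.monomial_left_injective one_ne_zero h
  have hmap : ∀ (b : ℤ →₀ ℕ) (i : ℤ), (Finsupp.mapDomain (· + 1) b) (i + 1) = b i :=
    fun b i => Finsupp.mapDomain_apply add_one_inj b i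
  have hw : ∀ i : ℤ, v.1 (i+1) + v.2 (i+1) + v.2 i
      = v'.1 (i+1) + v'.2 (i+1) + v'.2 i := by
    intro i
    have := DFunLike.congr_fun hW (i + 1)
    simpa [Wvec, Finsupp.add_apply, hmap] using this
  have ha : ∀ i : ℤ, 1 ≤ v.1 i → v.1 (i+1) = 0 ∧ v.2 (i+1) = 0 := by
    intro i hi; have := hv i; omega
  have ha' : ∀ i : ℤ, 1 ≤ v'.1 i → v'.1 (i+1) = 0 ∧ v'.2 (i+1) = 0 := by
    intro i hi; have := hv' i; omega
  obtain ⟨M, hM⟩ := Finset.exists_le ((v.2.support ∪ v'.2.support).image Neg.neg)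
  have hN : ∀ i ≤ -M - 1, v.2 i = 0 ∧ v'.2 i = 0 := by
    intro i hi
    constructor <;> by_contra hc
    · have : i ∈ v.2.support ∪ v'.2.support := by
        simp [Finsupp.mem_support_iff, hc]
      have := hM (-i) (Finset.mem_image_of_mem _ this)
      omega
    · have : i ∈ v.2.support ∪ v'.2.support := by
        simp [Finsupp.mem_support_iff, hc]
      have := hM (-i) (Finset.mem_image_of_mem _ this)
      omega
  have hk := key v.1 v.2 v'.1 v'.2 ha ha' hw (-M - 1) hN
  have e1 : v.1 = v'.1 := Finsupp.ext fun i => (hk i).1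
  have e2 : v.2 = v'.2 := Finsupp.ext fun i => (hk i).2
  exact Prod.ext e1 e2
end
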